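/- Let D be a free semi-theory with completion functor Φ_D : D → D̄. Let T, T' ∈ D̄_n (elements of some Hom_{D̄}([n],[r]), Hom_{D̄}([n],[r'])) and let φ = α_k ∘ … ∘ α_1 and φ' = α'_{k'} ∘ … ∘ α'_1 be morphisms of D (decompositions into free generators) with k ≤ k' and with α_1 and α'_1 not projections. If Φ_D(φ) ∘ T = Φ_D(φ') ∘ T', then φ' = φ ∘ θ and T = Φ_D(θ) ∘ T', where θ = α'_{k'-k} ∘ … ∘ α'_1. -/

import Mathlib

open CategoryTheory Limits Topology Topology.Homotopy

noncomputable section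

namespace SemiThPaper

/-! ### Weak homotopy equivalences -/

/-- The map induced by a continuous map on homotopy "groups" (sets for `N = Fin 0`). -/
def HomotopyGroup.map {X Y : Type} [TopologicalSpace X] [TopologicalSpace Y]
    (f : C(X, Y)) (N : Type) (x : X) :
    HomotopyGroup N X x → HomotopyGroup N Y (f x) :=
  Quotient.map
    (fun g => ⟨f.comp g.1, fun y hy => by
      simp only [ContinuousMap.comp_apply]
      rw [g.2 y hy]⟩)
    (fun g h H => H.elim fun H => ⟨H.compContinuousMap f⟩)

/-- The map induced on path components. -/
def ZerothHomotopy.map {X Y : Type} [TopologicalSpace X] [TopologicalSpace Y]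
    (f : C(X, Y)) : ZerothHomotopy X → ZerothHomotopy Y :=
  Quotient.map f (fun _ _ h => h.elim fun γ => ⟨γ.map f.continuous⟩)

/-- A weak homotopy equivalence of topological spaces: a continuous map inducing a
bijection on path components and on all homotopy groups at all basepoints. -/
def IsWeakHomotopyEquiv {X Y : TopCat} (f : X ⟶ Y) : Prop :=
  Function.Bijective (ZerothHomotopy.map (f.hom : C(X, Y))) ∧
    ∀ (n : ℕ) (x : X), Function.Bijective (HomotopyGroup.map (f.hom : C(X, Y)) (Fin n) x)

/-- A weak equivalence of simplicial sets: a map whose geometric realization is a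
weak homotopy equivalence. -/
def WeakEquiv {A B : SSet} (f : A ⟶ B) : Prop :=
  IsWeakHomotopyEquiv (SSet.toTop.map f)


/-! ### Semi-theories -/

/-- The objects `[1], [2], [3], …` of a semi-theory, indexed by positive integers. -/
@[ext]
structure Ob : Type where
  val : ℕ+

instance : Coe ℕ+ Ob := ⟨Ob.mk⟩

/-- An (unpointed) semi-theory: a category with objects `[1], [2], …`
together with distinguished projection morphisms `p^n_k : [n] ⟶ [1]`, where `p^1_1 = 𝟙 [1]`. -/
structure SemiTheory : Type 1 where
  cat : Category.{0, 0} Ob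
  proj : ∀ n : ℕ+, Fin n → @Quiver.Hom Ob cat.toCategoryStruct.toQuiver ⟨n⟩ ⟨1⟩
  proj_one : proj 1 ⟨0, Nat.one_pos⟩ = cat.toCategoryStruct.id ⟨1⟩

/-- The category of diagrams of simplicial sets over (the underlying category of)
a semi-theory. -/
abbrev SemiTheory.Diag (S : SemiTheory) : Type 1 :=
  @CategoryTheory.Functor Ob S.cat SSet _

/-- The `n`-fold levelwise power of a simplicial set. -/
@[simps]
def finPow (n : ℕ+) (A : SSet) : SSet where
  obj m := Fin n → A.obj m
  map θ := TypeCat.ofHom fun a k => A.map θ (a k)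

/-- The canonical comparison map `X[n] ⟶ X[1]^n` of a diagram over a semi-theory,
whose components are induced by the projections. -/
def SemiTheory.projFan (S : SemiTheory) (X : S.Diag) (n : ℕ+) :
    (letI := S.cat; (X.obj ⟨n⟩ ⟶ finPow n (X.obj ⟨1⟩))) :=
  letI := S.cat
  { app := fun m => TypeCat.ofHom fun a k => (X.map (S.proj n k)).app m a
    naturality := fun m m' θ => by
      ext a : 3
      funext k
      exact NatTrans.naturality_apply (X.map (S.proj n k)) θ a }

/-- A strict algebra over a semi-theory: the comparison maps `X[n] ⟶ X[1]^n` are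
isomorphisms for all `n > 1`. -/
def SemiTheory.IsStrictAlgebra (S : SemiTheory) (X : S.Diag) : Prop :=
  ∀ n : ℕ+, 1 < (n : ℕ) → IsIso (S.projFan X n)

/-- A homotopy algebra over a semi-theory: the comparison maps `X[n] ⟶ X[1]^n` are
weak equivalences of simplicial sets for all `n > 1`. -/
def SemiTheory.IsHomotopyAlgebra (S : SemiTheory) (X : S.Diag) : Prop :=
  ∀ n : ℕ+, 1 < (n : ℕ) → WeakEquiv (S.projFan X n)

/-- A semi-theory is an algebraic theory if composition with the projections induces
bijections `Hom([m],[n]) ≅ Hom([m],[1])^n` for all `m` and all `n > 1`. -/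
def SemiTheory.IsAlgebraic (S : SemiTheory) : Prop :=
  letI := S.cat
  ∀ (m n : ℕ+), 1 < (n : ℕ) →
    Function.Bijective (fun (f : (⟨m⟩ : Ob) ⟶ ⟨n⟩) (k : Fin n) => f ≫ S.proj n k)

/-- The comparison map `X[n] ⟶ X[1]^n` for a diagram of simplicial sets over any
category equipped with objects `[n]` and projection morphisms. -/
def projFanAt {C : Type} [Category.{0} C] (o : ℕ+ → C) (p : ∀ n : ℕ+, Fin n → (o n ⟶ o 1))
    (X : C ⥤ SSet) (n : ℕ+) : X.obj (o n) ⟶ finPow n (X.obj (o 1)) where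
  app m := TypeCat.ofHom fun a k => (X.map (p n k)).app m a
  naturality m m' θ := by
    ext a : 3
    funext k
    exact NatTrans.naturality_apply (X.map (p n k)) θ a

/-- Strictness of a diagram with respect to given objects and projections. -/
def IsStrictAt {C : Type} [Category.{0} C] (o : ℕ+ → C)
    (p : ∀ n : ℕ+, Fin n → (o n ⟶ o 1)) (X : C ⥤ SSet) : Prop :=
  ∀ n : ℕ+, 1 < (n : ℕ) → IsIso (projFanAt o p X n)

/-- The homotopy-algebra condition for a diagram with respect to given objects
and projections. -/
def IsHomotopyAt {C : Type} [Category.{0} C] (o : ℕ+ → C)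
    (p : ∀ n : ℕ+, Fin n → (o n ⟶ o 1)) (X : C ⥤ SSet) : Prop :=
  ∀ n : ℕ+, 1 < (n : ℕ) → WeakEquiv (projFanAt o p X n)

/-! ### Free semi-theories -/

/-- Generating data for a free semi-theory: a family of free generators that are
not projections (the projections are added separately as free generators). -/
structure GenData : Type 1 where
  gen : ℕ+ → ℕ+ → Type

/-- The generating quiver of the free semi-theory on `G`: the generators of `G`
together with projection arrows `p^n_k : [n] → [1]` for `n > 1`
(the projection `p^1_1` is the identity, i.e. the empty path). -/
inductive Arr (G : GenData) : ℕ+ → ℕ+ → Type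
  | gen {a b : ℕ+} : G.gen a b → Arr G a b
  | proj {n : ℕ+} (h : 1 < (n : ℕ)) (k : Fin n) : Arr G n 1

/-- The object type of the free semi-theory on `G` (a copy of `Ob`). -/
def FreeOb (G : GenData) : Type := Ob

instance freeQuiver (G : GenData) : Quiver (FreeOb G) :=
  ⟨fun a b => Arr G (Ob.val a) (Ob.val b)⟩

/-- The free semi-theory on `G`, as a category: the paths category on the
generating quiver. -/
abbrev FreeST (G : GenData) := CategoryTheory.Paths (FreeOb G)

/-- The object `[n]` of the free semi-theory. -/
def FreeST.of (G : GenData) (n : ℕ+) : FreeST G := (⟨n⟩ : Ob)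

/-- The generating projection arrow, as an arrow of the generating quiver. -/
def projArr (G : GenData) {n : ℕ+} (h : 1 < (n : ℕ)) (k : Fin n) :
    @Quiver.Hom (FreeOb G) _ (FreeST.of G n) (FreeST.of G 1) := Arr.proj h k

/-- The projection `p^n_k` in the free semi-theory. -/
def projPath (G : GenData) (n : ℕ+) (k : Fin n) : FreeST.of G n ⟶ FreeST.of G 1 :=
  if h : 1 < (n : ℕ) then (projArr G h k).toPath
  else eqToHom (congrArg (FreeST.of G)
    (PNat.coe_injective (by
      rw [PNat.one_coe]
      exact le_antisymm (not_lt.1 h) n.pos)))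

/-- The free semi-theory on `G`, as a semi-theory. -/
def freeSemiTheory (G : GenData) : SemiTheory where
  cat := inferInstanceAs (Category (FreeST G))
  proj n k := projPath G n k
  proj_one := by
    show projPath G 1 ⟨0, Nat.one_pos⟩ = _
    rw [projPath, dif_neg (by norm_num)]
    rfl

/-- The initial semi-theory `P` has no generators besides the projections. -/
def emptyGen : GenData := ⟨fun _ _ => PEmpty⟩

/-- The underlying category of the initial semi-theory `P`. -/
abbrev PCat := FreeST emptyGen

/-- The initial semi-theory `P`: its only non-identity morphisms are the projections. -/
def PTheory : SemiTheory := freeSemiTheory emptyGen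

/-- The action of the unique morphism of semi-theories `P ⟶ C` on generating arrows. -/
def jArr (G : GenData) : ∀ {a b : ℕ+}, Arr emptyGen a b →
    @Quiver.Path (FreeOb G) _ ((⟨a⟩ : Ob) : FreeST G) ((⟨b⟩ : Ob) : FreeST G)
  | _, _, .gen α => α.elim
  | _, _, .proj h k => (projArr G h k).toPath

/-- The unique morphism of semi-theories `P ⟶ C` into a free semi-theory. -/
def Jfree (G : GenData) : PCat ⥤ FreeST G :=
  Paths.lift
    { obj := fun n => (n : FreeST G)
      map := fun {a b} e => jArr G e }

/-! ### The completion of a free semi-theory -/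

/-- Trees representing the morphisms `[n] ⟶ [1]` of the completion `C̄` of a free
semi-theory: either a single edge labelled by a projection `p^n_k`, or a tree whose
lowest edge is labelled by a component `α_i` of a non-projection generator
`α : [m] ⟶ [r]` and which is obtained by grafting `m` smaller trees. -/
inductive CTree (G : GenData) (n : ℕ+) : Type
  | proj (k : Fin n) : CTree G n
  | node {m r : ℕ+} (α : G.gen m r) (i : Fin r) (ts : Fin m → CTree G n) : CTree G n

/-- Morphisms `[n] ⟶ [m]` in the completion: `m`-tuples of trees. -/
def CompHom (G : GenData) (n m : ℕ+) : Type := Fin m → CTree G n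

/-- Grafting: substituting the trees `T k` for the initial edges labelled `p^m_k`. -/
def CTree.graft {G : GenData} {n m : ℕ+} : CTree G m → CompHom G n m → CTree G n
  | .proj k, T => T k
  | .node α i ts, T => .node α i (fun j => (ts j).graft T)

/-- The identity of the completion. -/
def compId (G : GenData) (n : ℕ+) : CompHom G n n := fun k => .proj k

/-- Composition in the completion, by grafting. -/
def compComp {G : GenData} {a b c : ℕ+} (T : CompHom G a b) (S : CompHom G b c) :
    CompHom G a c :=
  fun j => (S j).graft T

theorem CTree.graft_id {G : GenData} {m : ℕ+} (t : CTree G m) :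
    t.graft (compId G m) = t := by
  induction t with
  | proj k => rfl
  | node α i ts ih =>
      simp only [CTree.graft]
      congr 1
      funext j
      exact ih j

theorem CTree.graft_graft {G : GenData} {a b c : ℕ+} (s : CTree G c)
    (U : CompHom G b c) (T : CompHom G a b) :
    (s.graft U).graft T = s.graft (compComp T U) := by
  induction s with
  | proj k => rfl
  | node α i ts ih =>
      simp only [CTree.graft]
      congr 1
      funext j
      exact ih j

/-- The object type of the completion (a copy of `Ob`). -/
def CompOb (G : GenData) : Type := Ob

/-- The completion `C̄` of a free semi-theory, as a category. -/
instance compCategory (G : GenData) : Category (CompOb G) where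
  Hom n m := CompHom G (Ob.val n) (Ob.val m)
  id n := compId G _
  comp f g := compComp f g
  id_comp f := funext fun j => CTree.graft_id _
  comp_id f := rfl
  assoc f g h := funext fun j => (CTree.graft_graft _ _ _).symm

/-- The object `[n]` of the completion. -/
def CompOb.of (G : GenData) (n : ℕ+) : CompOb G := (⟨n⟩ : Ob)

/-- The projection `p̂^n_k` of the completion: a single edge labelled `p^n_k`. -/
def compProj (G : GenData) (n : ℕ+) (k : Fin n) : CompOb.of G n ⟶ CompOb.of G 1 :=
  fun _ => .proj k

/-- The completion, as a semi-theory. -/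
def compSemiTheory (G : GenData) : SemiTheory where
  cat := inferInstanceAs (Category (CompOb G))
  proj n k := compProj G n k
  proj_one := by
    funext i
    have h0 : i = ⟨0, Nat.one_pos⟩ := Fin.ext (Nat.lt_one_iff.mp i.isLt)
    rw [h0]
    rfl

/-- The completion functor `Φ` on generating arrows. -/
def phiArr (G : GenData) : ∀ {a b : ℕ+}, Arr G a b → CompHom G a b
  | _, _, .gen α => fun i => .node α i (fun k => .proj k)
  | _, _, .proj _ k => fun _ => .proj k

/-- The completion functor `Φ_C : C ⟶ C̄` of a free semi-theory. -/
def phi (G : GenData) : FreeST G ⥤ CompOb G :=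
  Paths.lift
    { obj := fun n => (n : CompOb G)
      map := fun {a b} e => phiArr G e }

/-! ### Discrete simplicial sets, products, mapping complexes -/

/-- The discrete simplicial set on a type. -/
@[simps]
def disc (A : Type) : SSet where
  obj _ := A
  map _ := TypeCat.ofHom id

/-- The map of discrete simplicial sets induced by a function. -/
@[simps]
def disc.map {A B : Type} (f : A → B) : disc A ⟶ disc B where
  app _ := TypeCat.ofHom f

/-- The diagram of (discrete) simplicial sets corepresented by the object `[n]`
of a semi-theory. -/
def SemiTheory.corep (S : SemiTheory) (n : ℕ+) : S.Diag :=
  letI := S.cat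
  { obj := fun m => disc ((⟨n⟩ : Ob) ⟶ m)
    map := fun f => disc.map (fun g => g ≫ f)
    map_id := fun m => by
      apply NatTrans.ext
      funext x; ext g : 3
      show g ≫ 𝟙 m = g
      exact Category.comp_id g
    map_comp := fun f f' => by
      apply NatTrans.ext
      funext x; ext g : 3
      show g ≫ (_ ≫ _) = _
      exact (Category.assoc _ _ _).symm }

/-- Levelwise product of two simplicial sets. -/
@[simps]
def mulC (A K : SSet) : SSet where
  obj m := A.obj m × K.obj m
  map θ := TypeCat.ofHom fun p => (A.map θ p.1, K.map θ p.2)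
  map_id m := by ext p : 3; simp
  map_comp f g := by ext p : 3; simp

/-- `f × id` on levelwise products. -/
@[simps]
def mulC.mapLeft {A B : SSet} (f : A ⟶ B) (K : SSet) : mulC A K ⟶ mulC B K where
  app m := TypeCat.ofHom fun p => (f.app m p.1, p.2)
  naturality m m' θ := by
    ext p : 3
    simp only [mulC_obj, mulC_map, types_comp_apply]
    exact Prod.ext (by exact NatTrans.naturality_apply f θ p.1) rfl

/-- `id × g` on levelwise products. -/
@[simps]
def mulC.mapRight (A : SSet) {K L : SSet} (g : K ⟶ L) : mulC A K ⟶ mulC A L where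
  app m := TypeCat.ofHom fun p => (p.1, g.app m p.2)
  naturality m m' θ := by
    ext p : 3
    simp only [mulC_obj, mulC_map, types_comp_apply]
    exact Prod.ext rfl (by exact NatTrans.naturality_apply g θ p.2)

theorem mulC.mapRight_id (A K : SSet) : mulC.mapRight A (𝟙 K) = 𝟙 (mulC A K) := by
  apply NatTrans.ext; funext x; ext p : 3; rfl

theorem mulC.mapRight_comp (A : SSet) {K L M : SSet} (g : K ⟶ L) (h : L ⟶ M) :
    mulC.mapRight A (g ≫ h) = mulC.mapRight A g ≫ mulC.mapRight A h := by
  apply NatTrans.ext; funext x; ext p : 3; rfl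

/-- Naturality, in applied form. -/
theorem natApply {C : Type} [Category C] {X Y : C ⥤ SSet} (f : X ⟶ Y)
    {c c' : C} (φ : c ⟶ c') (x : SimplexCategoryᵒᵖ) (a : (X.obj c).obj x) :
    (f.app c').app x ((X.map φ).app x a) = (Y.map φ).app x ((f.app c).app x a) :=
  ConcreteCategory.congr_hom (NatTrans.congr_app (f.naturality φ) x) a

/-- The objectwise product of a diagram of simplicial sets with a constant
simplicial set. -/
@[simps]
def prodConst {C : Type} [Category C] (X : C ⥤ SSet) (K : SSet) : C ⥤ SSet where
  obj c := mulC (X.obj c) K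
  map f := mulC.mapLeft (X.map f) K
  map_id c := by
    apply NatTrans.ext; funext x; ext p : 3
    show ((X.map (𝟙 c)).app x p.1, p.2) = p
    rw [X.map_id]
    rfl
  map_comp f g := by
    apply NatTrans.ext; funext x; ext p : 3
    show ((X.map (f ≫ g)).app x p.1, p.2) = _
    rw [X.map_comp]
    rfl

/-- Functoriality of `prodConst` in the diagram variable. -/
@[simps]
def prodConst.mapX {C : Type} [Category C] {X X' : C ⥤ SSet} (f : X ⟶ X') (K : SSet) :
    prodConst X K ⟶ prodConst X' K where
  app c := mulC.mapLeft (f.app c) K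
  naturality c c' φ := by
    apply NatTrans.ext; funext x; ext p : 3
    simp only [prodConst_obj, prodConst_map, NatTrans.comp_app, mulC.mapLeft_app,
      types_comp_apply]
    exact Prod.ext (natApply f φ x p.1) rfl

/-- Functoriality of `prodConst` in the constant variable. -/
@[simps]
def prodConst.mapK {C : Type} [Category C] (X : C ⥤ SSet) {K L : SSet} (g : K ⟶ L) :
    prodConst X K ⟶ prodConst X L where
  app c := mulC.mapRight (X.obj c) g
  naturality c c' φ := by
    apply NatTrans.ext; funext x; ext p : 3
    rfl

theorem prodConst.mapK_id {C : Type} [Category C] (X : C ⥤ SSet) (K : SSet) :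
    prodConst.mapK X (𝟙 K) = 𝟙 (prodConst X K) := by
  apply NatTrans.ext; funext c
  exact mulC.mapRight_id _ _

theorem prodConst.mapK_comp {C : Type} [Category C] (X : C ⥤ SSet) {K L M : SSet}
    (g : K ⟶ L) (h : L ⟶ M) :
    prodConst.mapK X (g ≫ h) = prodConst.mapK X g ≫ prodConst.mapK X h := by
  apply NatTrans.ext; funext c
  exact mulC.mapRight_comp _ _ _

/-- The standard simplex `Δ[k]`, for `k : SimplexCategoryᵒᵖ`. -/
def stdS (k : SimplexCategoryᵒᵖ) : SSet := SSet.stdSimplex.obj k.unop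

/-- Functoriality of the standard simplex (contravariantly in `SimplexCategoryᵒᵖ`). -/
def stdMap {k l : SimplexCategoryᵒᵖ} (θ : k ⟶ l) : stdS l ⟶ stdS k :=
  SSet.stdSimplex.map θ.unop

theorem stdMap_id (k : SimplexCategoryᵒᵖ) : stdMap (𝟙 k) = 𝟙 (stdS k) :=
  SSet.stdSimplex.map_id _

theorem stdMap_comp {k l m : SimplexCategoryᵒᵖ} (θ : k ⟶ l) (η : l ⟶ m) :
    stdMap (θ ≫ η) = stdMap η ≫ stdMap θ :=
  SSet.stdSimplex.map_comp _ _

/-- The simplicial mapping complex of two diagrams of simplicial sets: its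
`m`-simplices are the natural transformations `X × Δ[m] ⟶ Y`. -/
def MapCx {C : Type} [Category C] (X Y : C ⥤ SSet) : SSet where
  obj m := prodConst X (stdS m) ⟶ Y
  map {m m'} θ := TypeCat.ofHom fun t => prodConst.mapK X (stdMap θ) ≫ t
  map_id m := by
    ext t : 3
    simp [stdMap_id, prodConst.mapK_id]
  map_comp θ η := by
    ext t : 3
    simp [stdMap_comp, prodConst.mapK_comp]

/-- Precomposition on mapping complexes. -/
def MapCx.pre {C : Type} [Category C] {X X' : C ⥤ SSet} (f : X' ⟶ X) (Y : C ⥤ SSet) :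
    MapCx X Y ⟶ MapCx X' Y where
  app m := TypeCat.ofHom fun t => prodConst.mapX f (stdS m) ≫ t
  naturality m m' θ := by
    ext t : 3
    rfl

/-- Postcomposition on mapping complexes. -/
def MapCx.post {C : Type} [Category C] (X : C ⥤ SSet) {Y Y' : C ⥤ SSet} (g : Y ⟶ Y') :
    MapCx X Y ⟶ MapCx X Y' where
  app m := TypeCat.ofHom fun t => t ≫ g
  naturality m m' θ := by
    ext t : 3
    rfl

/-- Restriction of mapping complexes along a functor. -/
def MapCx.whisk {C D : Type} [Category C] [Category D] (F : D ⥤ C) (X Y : C ⥤ SSet) :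
    MapCx X Y ⟶ MapCx (F ⋙ X) (F ⋙ Y) where
  app m := TypeCat.ofHom fun t =>
    (show prodConst (F ⋙ X) (stdS m) ⟶ F ⋙ Y from CategoryTheory.Functor.whiskerLeft F t)
  naturality m m' θ := by
    ext t : 3
    rfl

/-- The simplicial mapping complex of two simplicial sets: its `m`-simplices are
the maps `A × Δ[m] ⟶ B`. -/
def sMap (A B : SSet) : SSet where
  obj m := mulC A (stdS m) ⟶ B
  map {m m'} θ := TypeCat.ofHom fun t => mulC.mapRight A (stdMap θ) ≫ t
  map_id m := by
    ext t : 3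
    simp [stdMap_id, mulC.mapRight_id]
  map_comp θ η := by
    ext t : 3
    simp [stdMap_comp, mulC.mapRight_comp]

/-- Precomposition on simplicial mapping complexes. -/
def sMap.pre {A A' : SSet} (f : A' ⟶ A) (B : SSet) : sMap A B ⟶ sMap A' B where
  app m := TypeCat.ofHom fun t => mulC.mapLeft f (stdS m) ≫ t
  naturality m m' θ := by
    ext t : 3
    rfl

/-- Postcomposition on simplicial mapping complexes. -/
def sMap.post (A : SSet) {B B' : SSet} (g : B ⟶ B') : sMap A B ⟶ sMap A B' where
  app m := TypeCat.ofHom fun t => t ≫ g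
  naturality m m' θ := by
    ext t : 3
    rfl

/-! ### Decompositions of morphisms of a free semi-theory -/

/-- Whether a generating arrow is a generator of `G` (as opposed to a projection). -/
def Arr.isGen {G : GenData} : ∀ {a b : ℕ+}, Arr G a b → Prop
  | _, _, .gen _ => True
  | _, _, .proj _ _ => False

/-- A morphism `φ = α_k ∘ ⋯ ∘ α_1` of a free semi-theory (a path in the generating
quiver) starts with a non-projection: `α_1` is not a projection. -/
def startsNonProj {G : GenData} : ∀ {a b : FreeOb G}, Quiver.Path a b → Prop
  | _, _, .nil => False
  | _, _, .cons .nil e => Arr.isGen e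
  | _, _, .cons (.cons p e') _ => startsNonProj (Quiver.Path.cons p e')

/-- The first `j` arrows of a path (together with their target). -/
def pathTake {V : Type} [Quiver.{0} V] {a : V} : ∀ {b : V}, Quiver.Path a b → ℕ → Σ c : V, Quiver.Path a c
  | _, .nil, _ => ⟨a, .nil⟩
  | b, .cons p e, j => if j ≤ p.length then pathTake p j else ⟨b, .cons p e⟩

/-! ### The diagram `D̄_n` and its filtrations -/

/-- The `D`-diagram `D̄_n` with `D̄_n[m] = Hom_{D̄}([n],[m])`, where the `D`-action
is given by composition via the completion functor `Φ`. -/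
def barDn (G : GenData) (n : ℕ+) : FreeST G ⥤ SSet where
  obj m := disc (CompOb.of G n ⟶ (phi G).obj m)
  map {a b} ψ := disc.map (fun T => T ≫ (phi G).map ψ)
  map_id a := by
    apply NatTrans.ext
    funext x; ext T : 3
    show T ≫ (phi G).map (𝟙 a) = T
    rw [CategoryTheory.Functor.map_id]
    exact Category.comp_id _
  map_comp {a b c} ψ ψ' := by
    apply NatTrans.ext
    funext x; ext T : 3
    show T ≫ (phi G).map (ψ ≫ ψ') = (T ≫ (phi G).map ψ) ≫ (phi G).map ψ'
    rw [CategoryTheory.Functor.map_comp]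
    exact (Category.assoc _ _ _).symm

/-- The filtration of `D̄_n` by sub-`D`-diagrams:
`D̄_n^0 = D_n` (the image of the corepresented diagram) and `D̄_n^{k+1}` is the
smallest sub-`D`-diagram containing all tuples of elements of `D̄_n^k[1]`. -/
def Filt (G : GenData) (n : ℕ+) : ℕ → ∀ m : ℕ+, Set (CompHom G n m)
  | 0, m => {T | ∃ ψ : FreeST.of G n ⟶ FreeST.of G m, T = (phi G).map ψ}
  | k+1, m => {T | ∃ (m' : ℕ+) (S : CompHom G n m')
      (ψ : FreeST.of G m' ⟶ FreeST.of G m),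
      (∀ j : Fin m', (fun _ : Fin 1 => S j) ∈ Filt G n k 1) ∧
        T = (S : CompOb.of G n ⟶ CompOb.of G m') ≫ (phi G).map ψ}

/-- The filtration of `D̄_n` by sub-`P`-diagrams: `sD̄_n^0 = D_n` and `sD̄_n^{k+1}` is
the smallest sub-`P`-diagram containing all tuples of elements of `D̄ₙ^k[1]`. -/
def sFilt (G : GenData) (n : ℕ+) : ℕ → ∀ m : ℕ+, Set (CompHom G n m)
  | 0, m => Filt G n 0 m
  | k+1, m => {T | ∀ j : Fin m, (fun _ : Fin 1 => T j) ∈ Filt G n k 1}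

theorem Filt.closed (G : GenData) (n : ℕ+) (k : ℕ) {a b : ℕ+}
    {T : CompOb.of G n ⟶ CompOb.of G a} (hT : T ∈ Filt G n k a)
    (ψ : FreeST.of G a ⟶ FreeST.of G b) : T ≫ (phi G).map ψ ∈ Filt G n k b := by
  cases k with
  | zero =>
      obtain ⟨ψ₀, rfl⟩ := hT
      exact ⟨ψ₀ ≫ ψ, by rw [CategoryTheory.Functor.map_comp]; rfl⟩
  | succ k =>
      obtain ⟨m', S, ψ₁, hS, rfl⟩ := hT
      exact ⟨m', S, ψ₁ ≫ ψ, hS, by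
          rw [CategoryTheory.Functor.map_comp]
          exact Category.assoc _ _ _⟩

theorem phi_map_toPath (G : GenData) {a b : FreeOb G}
    (e : @Quiver.Hom (FreeOb G) _ a b) :
    (phi G).map e.toPath = phiArr G e :=
  Paths.lift_toPath _ _

theorem Filt.comp_proj (G : GenData) (n : ℕ+) (k : ℕ) {m : ℕ+} {T : CompHom G n m}
    (hT : T ∈ Filt G n k m) (j : Fin m) : (fun _ : Fin 1 => T j) ∈ Filt G n k 1 := by
  by_cases h : 1 < (m : ℕ)
  · have hc := Filt.closed G n k hT (projPath G m j)
    have he : (T : CompOb.of G n ⟶ CompOb.of G m) ≫ (phi G).map (projPath G m j)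
        = (fun _ : Fin 1 => T j) := by
      unfold projPath
      rw [dif_pos h]
      rw [phi_map_toPath G (projArr G h j)]
      rfl
    exact he ▸ hc
  · have hm : m = 1 := PNat.coe_injective (by
      rw [PNat.one_coe]
      exact le_antisymm (not_lt.1 h) m.pos)
    subst hm
    have ht : (fun _ : Fin 1 => T j) = T := by
      funext i
      congr 1
      exact Fin.ext (by
        rw [Nat.lt_one_iff.mp i.isLt, Nat.lt_one_iff.mp j.isLt])
    rwa [ht]

theorem sFilt.closed_arr (G : GenData) (n : ℕ+) (k : ℕ) {c b : ℕ+}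
    {T : CompHom G n c} (hT : T ∈ sFilt G n k c) (e : Arr emptyGen c b) :
    (T : CompOb.of G n ⟶ CompOb.of G c) ≫ (phi G).map (jArr G e) ∈ sFilt G n k b := by
  cases e with
  | gen α => exact α.elim
  | proj h j =>
      have h1 : (phi G).map (jArr G (Arr.proj h j)) = phiArr G (Arr.proj h j) := by
        show (phi G).map (projArr G h j).toPath = _
        exact phi_map_toPath G _
      rw [h1]
      show (fun _ : Fin 1 => T j) ∈ sFilt G n k 1
      cases k with
      | zero => exact Filt.comp_proj G n 0 hT j
      | succ k' => intro i; exact hT j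

theorem sFilt.closed (G : GenData) (n : ℕ+) (k : ℕ) {a b : PCat}
    {T : CompOb.of G n ⟶ CompOb.of G (Ob.val a)} (hT : T ∈ sFilt G n k (Ob.val a))
    (ψ : a ⟶ b) :
    T ≫ (phi G).map ((Jfree G).map ψ) ∈ sFilt G n k (Ob.val b) := by
  change @Quiver.Path (FreeOb emptyGen) _ a b at ψ
  induction ψ with
  | nil => exact hT
  | cons p e ih =>
      have h1 : (phi G).map ((Jfree G).map (Quiver.Path.cons p e))
          = (phi G).map ((Jfree G).map p) ≫ (phi G).map (jArr G e) := by
        show (phi G).map ((Jfree G).map (p ≫ Quiver.Hom.toPath e)) = _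
        refine ((congrArg (phi G).map ((Jfree G).map_comp p (Quiver.Hom.toPath e))).trans
          ((phi G).map_comp _ _)).trans ?_
        congr 1
        exact congrArg (phi G).map
          (show (Jfree G).map (Quiver.Hom.toPath e) = jArr G e from Paths.lift_toPath _ _)
      have h2 : T ≫ (phi G).map ((Jfree G).map (Quiver.Path.cons p e))
          = (T ≫ (phi G).map ((Jfree G).map p)) ≫ (phi G).map (jArr G e) := by
        exact (congrArg (fun f => T ≫ f) h1).trans (Category.assoc _ _ _).symm
      exact h2 ▸ sFilt.closed_arr G n k ih e

/-- The sub-`D`-diagram `D̄_n^k` of `D̄_n`. -/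
def FiltDiag (G : GenData) (n : ℕ+) (k : ℕ) : FreeST G ⥤ SSet where
  obj m := disc (Filt G n k (Ob.val m))
  map {a b} ψ := disc.map (fun T => ⟨T.1 ≫ (phi G).map ψ, Filt.closed G n k T.2 ψ⟩)
  map_id a := by
    apply NatTrans.ext
    funext x; ext T : 3
    apply Subtype.ext
    show T.1 ≫ (phi G).map (𝟙 a) = T.1
    rw [CategoryTheory.Functor.map_id]
    exact Category.comp_id _
  map_comp {a b c} ψ ψ' := by
    apply NatTrans.ext
    funext x; ext T : 3
    apply Subtype.ext
    show T.1 ≫ (phi G).map (ψ ≫ ψ') = (T.1 ≫ (phi G).map ψ) ≫ (phi G).map ψ'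
    rw [CategoryTheory.Functor.map_comp]
    exact (Category.assoc _ _ _).symm

/-- The sub-`P`-diagram `sD̄_n^k` of `D̄_n`. -/
def sFiltDiag (G : GenData) (n : ℕ+) (k : ℕ) : PCat ⥤ SSet where
  obj m := disc (sFilt G n k (Ob.val m))
  map {a b} ψ := disc.map (fun T => ⟨T.1 ≫ (phi G).map ((Jfree G).map ψ),
    sFilt.closed G n k T.2 ψ⟩)
  map_id a := by
    apply NatTrans.ext
    funext x; ext T : 3
    apply Subtype.ext
    show T.1 ≫ (phi G).map ((Jfree G).map (𝟙 a)) = T.1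
    rw [CategoryTheory.Functor.map_id, CategoryTheory.Functor.map_id]
    exact Category.comp_id _
  map_comp {a b c} ψ ψ' := by
    apply NatTrans.ext
    funext x; ext T : 3
    apply Subtype.ext
    show T.1 ≫ (phi G).map ((Jfree G).map (ψ ≫ ψ')) =
      (T.1 ≫ (phi G).map ((Jfree G).map ψ)) ≫ (phi G).map ((Jfree G).map ψ')
    rw [CategoryTheory.Functor.map_comp, CategoryTheory.Functor.map_comp]
    exact (Category.assoc _ _ _).symm


theorem Filt.mono (G : GenData) (n : ℕ+) (k : ℕ) (m : ℕ+) :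
    Filt G n k m ⊆ Filt G n (k+1) m := by
  intro T hT
  exact ⟨m, T, 𝟙 _, fun j => Filt.comp_proj G n k hT j,
    by
      rw [CategoryTheory.Functor.map_id]
      exact (Category.comp_id (X := CompOb.of G n) (Y := CompOb.of G m) T).symm⟩

theorem Filt.subset_sFilt (G : GenData) (n : ℕ+) (k : ℕ) (m : ℕ+) :
    Filt G n k m ⊆ sFilt G n (k+1) m :=
  fun _ hT j => Filt.comp_proj G n k hT j

theorem sFilt.subset_Filt (G : GenData) (n : ℕ+) (k : ℕ) (m : ℕ+) :
    sFilt G n (k+1) m ⊆ Filt G n (k+1) m := by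
  intro T hT
  exact ⟨m, T, 𝟙 _, hT, by
      rw [CategoryTheory.Functor.map_id]
      exact (Category.comp_id (X := CompOb.of G n) (Y := CompOb.of G m) T).symm⟩

/-- Restriction of a `D`-diagram to a `P`-diagram. -/
def resP (G : GenData) (X : FreeST G ⥤ SSet) : PCat ⥤ SSet := Jfree G ⋙ X

/-- The inclusion `D̄_n^k ⟶ D̄_n^{k+1}` of sub-`D`-diagrams. -/
def filtIncl (G : GenData) (n : ℕ+) (k : ℕ) : FiltDiag G n k ⟶ FiltDiag G n (k+1) where
  app m := disc.map (Set.inclusion (Filt.mono G n k (Ob.val m)))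
  naturality a b ψ := by
    apply NatTrans.ext
    funext x; ext T : 3
    apply Subtype.ext
    rfl

/-- The inclusion `D̄_n^k ⟶ sD̄_n^{k+1}` of sub-`P`-diagrams. -/
def filtInclS (G : GenData) (n : ℕ+) (k : ℕ) :
    resP G (FiltDiag G n k) ⟶ sFiltDiag G n (k+1) where
  app m := disc.map (Set.inclusion (Filt.subset_sFilt G n k (Ob.val m)))
  naturality a b ψ := by
    apply NatTrans.ext
    funext x; ext T : 3
    apply Subtype.ext
    rfl

/-- The inclusion `sD̄_n^{k+1} ⟶ D̄_n^{k+1}` of sub-`P`-diagrams. -/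
def sFiltIncl (G : GenData) (n : ℕ+) (k : ℕ) :
    sFiltDiag G n (k+1) ⟶ resP G (FiltDiag G n (k+1)) where
  app m := disc.map (Set.inclusion (sFilt.subset_Filt G n k (Ob.val m)))
  naturality a b ψ := by
    apply NatTrans.ext
    funext x; ext T : 3
    apply Subtype.ext
    rfl

/-! Component `0` of `T ≫ Φ(φ)` is a tree whose root edge is labelled `α_i`, where `α` is the
last non-projection generator of `φ` and `i` is the index of the projection following it
(`i = 0` if there is none); its subtrees form `T ≫ Φ(ψ)` for the part `ψ` of `φ` before `α`.
A projection can only follow a generator, and neither path starts with one, so comparing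
roots in `T ≫ Φ(φ) = T' ≫ Φ(φ')` shows that `φ` and `φ'` end with the same arrow and that
the equation survives its removal. Removing the arrows of `φ` one by one leaves `θ` from
`φ'` and the equation `T = T' ≫ Φ(θ)`. -/

theorem pathTake_cons {V : Type} [Quiver.{0} V] {a b c : V} (p : Quiver.Path a b) (e : b ⟶ c)
    {j : ℕ} (hj : j ≤ p.length) : pathTake (p.cons e) j = pathTake p j :=
  if_pos hj

theorem pathTake_length {V : Type} [Quiver.{0} V] {a : V} :
    ∀ {b : V} (p : Quiver.Path a b), pathTake p p.length = ⟨b, p⟩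
  | _, .nil => rfl
  | _, .cons _ _ => if_neg (Nat.not_succ_le_self _)

section Cancellation

variable {G : GenData}

def genArr {m c : ℕ+} (γ : G.gen m c) :
    @Quiver.Hom (FreeOb G) _ (FreeST.of G m) (FreeST.of G c) :=
  Arr.gen γ

theorem startsNonProj_cons_cons {a b c d : FreeOb G} (p : Quiver.Path a b) (e : b ⟶ c)
    (f : c ⟶ d) : startsNonProj ((p.cons e).cons f) ↔ startsNonProj (p.cons e) := by
  rw [startsNonProj.eq_def]

-- Unlike `startsNonProj`, this condition passes to prefixes, so it survives the induction.
def NoLeadingProj {a b : FreeOb G} (p : Quiver.Path a b) : Prop :=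
  p.length = 0 ∨ startsNonProj p

theorem NoLeadingProj.of_cons {a b c : FreeOb G} {p : Quiver.Path a b} {e : b ⟶ c}
    (h : NoLeadingProj (p.cons e)) : NoLeadingProj p := by
  cases p with
  | nil => exact Or.inl rfl
  | cons q f =>
    exact Or.inr ((startsNonProj_cons_cons q f e).1 (h.resolve_left (Nat.succ_ne_zero _)))

theorem NoLeadingProj.length_pos {a b c : FreeOb G} {p : Quiver.Path a b} {e : b ⟶ c}
    (h : NoLeadingProj (p.cons e)) (he : ¬ Arr.isGen e) : 0 < p.length := by
  cases p with
  | nil => exact absurd (h.resolve_left (Nat.succ_ne_zero _)) (by rwa [startsNonProj.eq_def])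
  | cons q f => exact Nat.succ_pos _

theorem exists_eq_cons_genArr {a b : FreeOb G} (hb : 1 < (b.val : ℕ))
    (p : Quiver.Path a b) (hp : 0 < p.length) :
    ∃ (m : ℕ+) (q : Quiver.Path a (FreeST.of G m)) (γ : G.gen m b.val),
      p = q.cons (genArr γ) := by
  obtain ⟨m⟩ := b
  cases p with
  | nil => exact absurd hp (Nat.lt_irrefl 0)
  | cons q e =>
    change Arr G _ m at e
    cases e with
    | gen γ => exact ⟨_, q, γ, rfl⟩
    | proj _ _ => exact absurd hb (lt_irrefl 1)

theorem comp_phi_cons_eq_of_comp_phi_eq {n : ℕ+} {a a' b c : FreeOb G} {p : Quiver.Path a b}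
    {p' : Quiver.Path a' b} {T : CompOb.of G n ⟶ (phi G).obj a}
    {T' : CompOb.of G n ⟶ (phi G).obj a'} (h : T ≫ (phi G).map p = T' ≫ (phi G).map p')
    (e : b ⟶ c) : T ≫ (phi G).map (p.cons e) = T' ≫ (phi G).map (p'.cons e) := by
  change T ≫ ((phi G).map p ≫ _) = T' ≫ ((phi G).map p' ≫ _)
  exact (Category.assoc _ _ _).symm.trans ((congrArg (· ≫ _) h).trans (Category.assoc _ _ _))

theorem exists_eq_cons_of_comp_phi_cons_eq {n : ℕ+} {a a' b c : FreeOb G} {p : Quiver.Path a b}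
    {e : b ⟶ c} {φ' : Quiver.Path a' c} (hφ : NoLeadingProj (p.cons e))
    (hφ' : NoLeadingProj φ') (hlen : 0 < φ'.length)
    (T : CompOb.of G n ⟶ (phi G).obj a) (T' : CompOb.of G n ⟶ (phi G).obj a')
    (h : T ≫ (phi G).map (p.cons e) = T' ≫ (phi G).map φ') :
    ∃ p' : Quiver.Path a' b, φ' = p'.cons e ∧ T ≫ (phi G).map p = T' ≫ (phi G).map p' := by
  obtain ⟨bv⟩ := b
  obtain ⟨cv⟩ := c
  have h0 := congrFun h ⟨0, cv.pos⟩
  cases φ' with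
  | nil => exact absurd hlen (Nat.lt_irrefl 0)
  | @cons b' _ p' e' =>
    obtain ⟨b'v⟩ := b'
    change Arr G bv cv at e
    change Arr G b'v cv at e'
    cases e with
    | gen γ =>
      cases e' with
      | gen γ' =>
        obtain ⟨rfl, -, hγ, -, hts⟩ := CTree.node.inj h0
        cases eq_of_heq hγ
        exact ⟨p', rfl, eq_of_heq hts⟩
      | proj hm' _ =>
        obtain ⟨_, _, _, rfl⟩ := exists_eq_cons_genArr hm' p' (hφ'.length_pos id)
        obtain ⟨-, rfl, -⟩ := CTree.node.inj h0
        exact absurd hm' (lt_irrefl 1)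
    | proj hm k =>
      obtain ⟨_, q, γ, rfl⟩ := exists_eq_cons_genArr hm p (hφ.length_pos id)
      cases e' with
      | gen _ =>
        obtain ⟨-, rfl, -⟩ := CTree.node.inj h0
        exact absurd hm (lt_irrefl 1)
      | proj hm' _ =>
        obtain ⟨_, q', _, rfl⟩ := exists_eq_cons_genArr hm' p' (hφ'.length_pos id)
        obtain ⟨rfl, rfl, hγ, hk, hts⟩ := CTree.node.inj h0
        cases eq_of_heq hγ
        cases eq_of_heq hk
        have hq : T ≫ (phi G).map q = T' ≫ (phi G).map q' := eq_of_heq hts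
        exact ⟨_, rfl, comp_phi_cons_eq_of_comp_phi_eq hq _⟩

theorem comp_phi_cancellation_of_noLeadingProj {n : ℕ+} {a a' b : FreeOb G}
    (φ : Quiver.Path a b) (φ' : Quiver.Path a' b) (hφ : NoLeadingProj φ)
    (hφ' : NoLeadingProj φ') (hlen : φ.length ≤ φ'.length)
    (T : CompOb.of G n ⟶ (phi G).obj a) (T' : CompOb.of G n ⟶ (phi G).obj a')
    (h : T ≫ (phi G).map φ = T' ≫ (phi G).map φ') :
    ∃ θ : Quiver.Path a' a, pathTake φ' (φ'.length - φ.length) = ⟨a, θ⟩ ∧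
      φ' = θ.comp φ ∧ T = T' ≫ (phi G).map θ := by
  induction φ with
  | nil => exact ⟨φ', pathTake_length φ', rfl, h⟩
  | cons p e ih =>
    obtain ⟨p', rfl, hp⟩ :=
      exists_eq_cons_of_comp_phi_cons_eq hφ hφ' (Nat.lt_of_lt_of_le (Nat.succ_pos _) hlen) T T' h
    have hlen' : p.length ≤ p'.length := Nat.le_of_succ_le_succ hlen
    obtain ⟨θ, htake, rfl, hT⟩ := ih p' hφ.of_cons hφ'.of_cons hlen' hp
    refine ⟨θ, ?_, rfl, hT⟩
    rw [Quiver.Path.length_cons, Quiver.Path.length_cons, Nat.add_sub_add_right,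
      pathTake_cons _ _ (Nat.sub_le _ _), htake]

end Cancellation

theorem comp_phi_cancellation (G : GenData) {n r r' s : ℕ+}
    (φ : FreeST.of G r ⟶ FreeST.of G s) (φ' : FreeST.of G r' ⟶ FreeST.of G s)
    (hφ : startsNonProj φ) (hφ' : startsNonProj φ')
    (hlen : Quiver.Path.length φ ≤ Quiver.Path.length φ')
    (T : CompOb.of G n ⟶ CompOb.of G r) (T' : CompOb.of G n ⟶ CompOb.of G r')
    (h : T ≫ (phi G).map φ = T' ≫ (phi G).map φ') :
    ∃ θ : FreeST.of G r' ⟶ FreeST.of G r,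
      pathTake φ' (Quiver.Path.length φ' - Quiver.Path.length φ)
          = ⟨FreeST.of G r, θ⟩ ∧
      φ' = θ ≫ φ ∧ T = T' ≫ (phi G).map θ :=
  comp_phi_cancellation_of_noLeadingProj φ φ' (.inr hφ) (.inr hφ') hlen T T' h

end SemiThPaper
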